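/- Let H_0 = (S,T;F_0) be a simple bigraph with bipartite complement G_0, r_S the rank function of a matroid on S, p_T a positively intersecting supermodular set-function on T, and m_V = (m_S, m_T) a degree-specification with m̃_S(S) = m̃_T(T) = γ satisfying Condition (★). Then the maximum of ∑_{V' ∈ 𝓘} p_1(V') over all ST-independent families 𝓘 of subsets of V equals γ. -/

import Mathlib

open Finset

variable {α : Type*} [DecidableEq α]

/-- The number of edges of the bigraph with edge set `E` connecting `X ⊆ S` and `Y ⊆ T`. -/
def edgesBetween (E : Finset (α × α)) (X Y : Finset α) : ℕ :=
  (E.filter (fun e => e.1 ∈ X ∧ e.2 ∈ Y)).card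

/-- The set of neighbours (in `S`) of a subset `Z ⊆ T` in the bigraph with edge set `E`. -/
def nbrs (E : Finset (α × α)) (Z : Finset α) : Finset α :=
  (E.filter (fun e => e.2 ∈ Z)).image Prod.fst

/-- The degree of a node `v ∈ S` in the bigraph with edge set `E`. -/
def degS (E : Finset (α × α)) (v : α) : ℕ := (E.filter (fun e => e.1 = v)).card

/-- The degree of a node `v ∈ T` in the bigraph with edge set `E`. -/
def degT (E : Finset (α × α)) (v : α) : ℕ := (E.filter (fun e => e.2 = v)).card

/-- `r` is the rank function of a matroid on the ground set `S`. -/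
def IsRankFn (S : Finset α) (r : Finset α → ℕ) : Prop :=
  (∀ X, X ⊆ S → r X ≤ X.card) ∧
  (∀ X Y, X ⊆ Y → Y ⊆ S → r X ≤ r Y) ∧
  (∀ X Y, X ⊆ S → Y ⊆ S → r (X ∪ Y) + r (X ∩ Y) ≤ r X + r Y)

/-- `V' ∈ ℋ₀`: no arc of the orientation of `H₀` (from `S` to `T`) enters `V'`. -/
def memH₀ (F₀ : Finset (α × α)) (V' : Finset α) : Prop :=
  ∀ e ∈ F₀, e.2 ∈ V' → e.1 ∈ V'

instance (F₀ : Finset (α × α)) (V' : Finset α) : Decidable (memH₀ F₀ V') := by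
  unfold memH₀; infer_instance

/-- The set-function `p₀` of the paper:
`p₀(V') = max{p_T({y}) − r_S(X), m_T(y) − |X| + d_{H₀}(y)}` if `V' = X ∪ {y} ∈ ℋ₀`
with `X ⊆ S`, `y ∈ T`; `p₀(V') = p_T(Y) − r_S(X)` if `V' = X ∪ Y ∈ ℋ₀` with `X ⊆ S`,
`Y ⊆ T`, `|Y| ≥ 2`; and `p₀(V') = 0` otherwise. -/
def p₀ (S T : Finset α) (F₀ : Finset (α × α)) (rS : Finset α → ℕ)
    (pT : Finset α → ℤ) (m : α → ℤ) (V' : Finset α) : ℤ :=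
  if V' ⊆ S ∪ T ∧ memH₀ F₀ V' then
    if (V' ∩ T).card = 1 then
      max (pT (V' ∩ T) - (rS (V' ∩ S) : ℤ))
        ((∑ y ∈ V' ∩ T, m y) - ((V' ∩ S).card : ℤ) + ∑ y ∈ V' ∩ T, (degT F₀ y : ℤ))
    else if 2 ≤ (V' ∩ T).card then pT (V' ∩ T) - (rS (V' ∩ S) : ℤ)
    else 0
  else 0

/-- `V_s = {v ∈ V − s : sv ∉ F₀}`. -/
def Vs (S T : Finset α) (F₀ : Finset (α × α)) (s : α) : Finset α :=
  ((S ∪ T).erase s).filter (fun v => (s, v) ∉ F₀)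

/-- The set-function `p₁` of the paper: `p₁(V_s) = m_S(s)` for `s ∈ S`
(such an `s` is unique when it exists), and `p₁(V') = p₀(V')` otherwise. -/
def p₁ (S T : Finset α) (F₀ : Finset (α × α)) (rS : Finset α → ℕ)
    (pT : Finset α → ℤ) (m : α → ℤ) (V' : Finset α) : ℤ :=
  if ∃ s ∈ S, V' = Vs S T F₀ s then
    ∑ s ∈ S.filter (fun s => V' = Vs S T F₀ s), m s
  else p₀ S T F₀ rS pT m V'

/-- Condition (★) of the paper: for every `Y ⊆ T`, `X ⊆ S` and every subpartition
`𝒯 = {T₁, …, T_q}` of `T − Y` into nonempty sets,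
`m̃(X) + m̃(Y) − d_{G₀}(X,Y) + ∑ᵢ (p_T(Tᵢ) − r_S(X ∪ Γ_{H₀}(Tᵢ))) ≤ γ`,
where `G₀ = (S ×ˢ T) \ F₀` is the bipartite complement of `H₀`. -/
def StarCond (S T : Finset α) (F₀ : Finset (α × α)) (rS : Finset α → ℕ)
    (pT : Finset α → ℤ) (m : α → ℤ) (γ : ℤ) : Prop :=
  ∀ X ⊆ S, ∀ Y ⊆ T, ∀ 𝒯 : Finset (Finset α),
    (∀ Ti ∈ 𝒯, Ti.Nonempty ∧ Ti ⊆ T \ Y) →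
    (∀ T₁ ∈ 𝒯, ∀ T₂ ∈ 𝒯, T₁ ≠ T₂ → Disjoint T₁ T₂) →
    (∑ v ∈ X, m v) + (∑ v ∈ Y, m v)
        - (edgesBetween ((S ×ˢ T) \ F₀) X Y : ℤ)
        + ∑ Ti ∈ 𝒯, (pT Ti - (rS (X ∪ nbrs F₀ Ti) : ℤ)) ≤ γ

/-!
Two members `A`, `B` of an `ST`-independent family with positive `p₀`-values whose `T`-parts meet
must together cover `S`, and then `p₀ A + p₀ B ≤ p₀ (A ∩ B)`, by supermodularity of `p_T`,
submodularity of `r_S` and the two bounds `p_T(Y) ≤ r_S(S)` and `m_T(y) + d_{H₀}(y) ≤ |S|` that (★)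
yields. Uncrossing in this way never loses weight, so one may assume the `T`-parts disjoint. Then
each member sits in the `r_S`-branch or in the degree branch of `p₀`: the former give the
subpartition `{T_i}` of (★), the latter the set `Y`, and `X` is the set of those `s` whose `V_s`
belongs to the family. The family `{V_s : s ∈ S}` attains `m̃_S(S) = γ`.
-/

theorem Finset.sum_le_sum_filter_pos {ι M : Type*} [AddCommMonoid M] [LinearOrder M]
    [IsOrderedAddMonoid M] (s : Finset ι) (f : ι → M) :
    ∑ i ∈ s, f i ≤ ∑ i ∈ s with 0 < f i, f i := by
  rw [← sum_filter_add_sum_filter_not s (0 < f ·)]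
  exact add_le_of_nonpos_right (sum_nonpos fun i hi => not_lt.mp (mem_filter.mp hi).2)

theorem card_filter_snd_eq (E : Finset (α × α)) (X : Finset α) (y : α) :
    #(E.filter fun e => e.1 ∈ X ∧ e.2 = y) = #(X.filter fun s => (s, y) ∈ E) := by
  apply card_nbij' Prod.fst (·, y)
  · intro e he
    rw [mem_coe, mem_filter] at he
    obtain ⟨heE, heX, rfl⟩ := he
    exact mem_filter.mpr ⟨heX, heE⟩
  · intro s hs
    rw [mem_coe, mem_filter] at hs
    exact mem_filter.mpr ⟨hs.2, hs.1, rfl⟩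
  · intro e he
    rw [mem_coe, mem_filter] at he
    exact Prod.ext rfl he.2.2.symm
  · intro s _
    rfl

theorem degT_eq_card_filter {F₀ : Finset (α × α)} {W : Finset α} {y : α}
    (hW : nbrs F₀ {y} ⊆ W) : degT F₀ y = #(W.filter fun s => (s, y) ∈ F₀) := by
  rw [degT, ← card_filter_snd_eq]
  congr 1
  refine filter_congr fun e he => ⟨fun hy => ⟨hW ?_, hy⟩, And.right⟩
  exact mem_image.mpr ⟨e, mem_filter.mpr ⟨he, mem_singleton.mpr hy⟩, rfl⟩

theorem edgesBetween_sdiff_singleton_add_degT_le (E : Finset (α × α)) {F₀ : Finset (α × α)}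
    {X W : Finset α} {y : α} (hX : X ⊆ W) (hW : nbrs F₀ {y} ⊆ W) :
    edgesBetween (E \ F₀) X {y} + degT F₀ y ≤ #W := by
  have hedges : edgesBetween (E \ F₀) X {y} ≤ #(W.filter fun s => (s, y) ∉ F₀) := by
    simp only [edgesBetween, mem_singleton]
    rw [card_filter_snd_eq]
    exact card_le_card fun s hs => by
      simp only [mem_filter, mem_sdiff] at hs ⊢
      exact ⟨hX hs.1, hs.2.2⟩
  rw [degT_eq_card_filter hW]
  have := card_filter_add_card_filter_not (s := W) (fun s => (s, y) ∈ F₀)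
  omega

theorem edgesBetween_biUnion {ι : Type*} (E : Finset (α × α)) (X : Finset α) {s : Finset ι}
    {f : ι → Finset α} (h : (s : Set ι).PairwiseDisjoint f) :
    edgesBetween E X (s.biUnion f) = ∑ i ∈ s, edgesBetween E X (f i) := by
  have hfilter : E.filter (fun e => e.1 ∈ X ∧ e.2 ∈ s.biUnion f) =
      s.biUnion fun i => E.filter fun e => e.1 ∈ X ∧ e.2 ∈ f i := by
    ext e
    simp only [mem_filter, mem_biUnion]
    grind
  rw [edgesBetween, hfilter, card_biUnion]
  · rfl
  · intro i hi j hj hij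
    exact disjoint_left.mpr fun e he he' =>
      disjoint_left.mp (h hi hj hij) (mem_filter.mp he).2.2 (mem_filter.mp he').2.2

theorem card_inter_add_card_inter_of_subset_union {S A B : Finset α} (hU : S ⊆ A ∪ B) :
    #(A ∩ S) + #(B ∩ S) = #S + #(A ∩ B ∩ S) := by
  have hunion : A ∩ S ∪ B ∩ S = S := by
    rw [← union_inter_distrib_right]; exact inter_eq_right.mpr hU
  rw [← card_union_add_card_inter, hunion, ← inter_inter_distrib_right]

section IsRankFn

variable {S : Finset α} {r : Finset α → ℕ}

theorem IsRankFn.mono (hr : IsRankFn S r) {X Y : Finset α} (hXY : X ⊆ Y) (hY : Y ⊆ S) :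
    r X ≤ r Y :=
  hr.2.1 X Y hXY hY

theorem IsRankFn.submodular (hr : IsRankFn S r) {X Y : Finset α} (hX : X ⊆ S) (hY : Y ⊆ S) :
    r (X ∪ Y) + r (X ∩ Y) ≤ r X + r Y :=
  hr.2.2 X Y hX hY

theorem IsRankFn.add_card_le (hr : IsRankFn S r) {X Y : Finset α} (hXY : X ⊆ Y) (hY : Y ⊆ S) :
    r Y + #X ≤ r X + #Y := by
  have hsub := hr.submodular (Y := Y \ X) (hXY.trans hY) (sdiff_subset.trans hY)
  rw [union_sdiff_of_subset hXY] at hsub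
  have hcard := hr.1 (Y \ X) (sdiff_subset.trans hY)
  have := card_sdiff_add_card_eq_card hXY
  omega

theorem IsRankFn.add_le_of_subset_union (hr : IsRankFn S r) {A B : Finset α} (hU : S ⊆ A ∪ B) :
    r S + r (A ∩ B ∩ S) ≤ r (A ∩ S) + r (B ∩ S) := by
  have h := hr.submodular (X := A ∩ S) (Y := B ∩ S) inter_subset_right inter_subset_right
  rwa [← union_inter_distrib_right, inter_eq_right.mpr hU, ← inter_inter_distrib_right] at h

end IsRankFn

def IsPosIntersectingSupermodular (T : Finset α) (p : Finset α → ℤ) : Prop :=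
  ∀ X Y : Finset α, X ⊆ T → Y ⊆ T → (X ∩ Y).Nonempty →
    0 < p X → 0 < p Y → p X + p Y ≤ p (X ∩ Y) + p (X ∪ Y)

def STIndependent (S T A B : Finset α) : Prop :=
  A ∩ B ∩ T = ∅ ∨ S ⊆ A ∪ B

section STIndependent

variable {S T A B C : Finset α}

theorem STIndependent.symm (h : STIndependent S T A B) : STIndependent S T B A := by
  rwa [STIndependent, inter_comm B, union_comm B]

theorem STIndependent.subset_union (h : STIndependent S T A B) (hAB : (A ∩ B ∩ T).Nonempty) :
    S ⊆ A ∪ B :=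
  h.resolve_left hAB.ne_empty

theorem STIndependent.inter_left (hA : STIndependent S T A C) (hB : STIndependent S T B C) :
    STIndependent S T (A ∩ B) C := by
  rcases hA with hA | hA
  · left
    exact subset_empty.mp
      (hA ▸ inter_subset_inter_right (inter_subset_inter_right inter_subset_left))
  rcases hB with hB | hB
  · left
    exact subset_empty.mp
      (hB ▸ inter_subset_inter_right (inter_subset_inter_right inter_subset_right))
  · right
    rw [inter_union_distrib_right]
    exact subset_inter hA hB

instance : Std.Symm (STIndependent S T) := ⟨fun _ _ h => h.symm⟩

end STIndependent

section Vs

variable {S T : Finset α} {F₀ : Finset (α × α)}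

theorem mem_Vs {s v : α} : v ∈ Vs S T F₀ s ↔ v ∈ S ∪ T ∧ v ≠ s ∧ (s, v) ∉ F₀ := by
  simp only [Vs, mem_filter, mem_erase, and_assoc, and_comm (a := v ≠ s), and_left_comm]

theorem Vs_subset (s : α) : Vs S T F₀ s ⊆ S ∪ T :=
  fun _ hv => (mem_Vs.mp hv).1

theorem stIndependent_Vs (hST : Disjoint S T) (hF₀ : F₀ ⊆ S ×ˢ T) {s s' : α} (hss' : s ≠ s') :
    STIndependent S T (Vs S T F₀ s) (Vs S T F₀ s') := by
  right
  intro v hv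
  have hvF : ∀ u, (u, v) ∉ F₀ := fun u hu =>
    disjoint_left.mp hST hv (mem_product.mp (hF₀ hu)).2
  by_cases hvs : v = s
  · subst hvs
    exact mem_union_right _ (mem_Vs.mpr ⟨mem_union_left _ hv, hss', hvF _⟩)
  · exact mem_union_left _ (mem_Vs.mpr ⟨mem_union_left _ hv, hvs, hvF _⟩)

theorem pairwise_stIndependent_image_Vs (hST : Disjoint S T) (hF₀ : F₀ ⊆ S ×ˢ T) :
    (↑(S.image (Vs S T F₀)) : Set (Finset α)).Pairwise (STIndependent S T) := by
  rw [coe_image]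
  exact Set.Pairwise.image fun s _ s' _ hne => stIndependent_Vs hST hF₀ hne

theorem mem_of_stIndependent_Vs (hST : Disjoint S T) {A : Finset α} (hA : memH₀ F₀ A)
    (hAT : (A ∩ T).Nonempty) {s : α} (hs : s ∈ S) (h : STIndependent S T A (Vs S T F₀ s)) :
    s ∈ A := by
  rcases h with h | h
  · obtain ⟨y, hy⟩ := hAT
    obtain ⟨hyA, hyT⟩ := mem_inter.mp hy
    by_contra hsA
    have hsy : (s, y) ∉ F₀ := fun hsy => hsA (hA _ hsy hyA)
    have hyV : y ∈ Vs S T F₀ s :=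
      mem_Vs.mpr ⟨mem_union_right _ hyT, fun hys => disjoint_left.mp hST hs (hys ▸ hyT), hsy⟩
    exact (eq_empty_iff_forall_notMem.mp h) y (mem_inter.mpr ⟨mem_inter.mpr ⟨hyA, hyV⟩, hyT⟩)
  · exact (mem_union.mp (h hs)).resolve_right fun hsV => (mem_Vs.mp hsV).2.1 rfl

end Vs

section p₀

variable {S T : Finset α} {F₀ : Finset (α × α)} {rS : Finset α → ℕ} {pT : Finset α → ℤ}
  {m : α → ℤ} {A B : Finset α}

/-- The `r_S`-branch `p_T(Y) − r_S(X)` of `p₀` at `A = X ∪ Y`. -/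
def rankTerm (S T : Finset α) (rS : Finset α → ℕ) (pT : Finset α → ℤ) (A : Finset α) : ℤ :=
  pT (A ∩ T) - (rS (A ∩ S) : ℤ)

/-- The degree branch `m_T(y) − |X| + d_{H₀}(y)` of `p₀` at `A = X ∪ {y}`. -/
def degreeTerm (S T : Finset α) (F₀ : Finset (α × α)) (m : α → ℤ) (A : Finset α) : ℤ :=
  (∑ y ∈ A ∩ T, m y) - (#(A ∩ S) : ℤ) + ∑ y ∈ A ∩ T, (degT F₀ y : ℤ)

theorem p₀_of_mem (h : A ⊆ S ∪ T ∧ memH₀ F₀ A) :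
    p₀ S T F₀ rS pT m A =
      if #(A ∩ T) = 1 then max (rankTerm S T rS pT A) (degreeTerm S T F₀ m A)
      else if 2 ≤ #(A ∩ T) then rankTerm S T rS pT A else 0 := by
  rw [p₀, if_pos h]
  rfl

theorem rankTerm_le_p₀ (hA : A ⊆ S ∪ T) (hH : memH₀ F₀ A) (hAT : (A ∩ T).Nonempty) :
    rankTerm S T rS pT A ≤ p₀ S T F₀ rS pT m A := by
  have := card_pos.mpr hAT
  rw [p₀_of_mem ⟨hA, hH⟩]
  split_ifs
  · exact le_max_left _ _
  · exact le_rfl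
  · omega

theorem degreeTerm_le_p₀ (hA : A ⊆ S ∪ T) (hH : memH₀ F₀ A) (hAT : #(A ∩ T) = 1) :
    degreeTerm S T F₀ m A ≤ p₀ S T F₀ rS pT m A := by
  rw [p₀_of_mem ⟨hA, hH⟩, if_pos hAT]
  exact le_max_right _ _

theorem p₀_pos_cases (h : 0 < p₀ S T F₀ rS pT m A) :
    A ⊆ S ∪ T ∧ memH₀ F₀ A ∧ (A ∩ T).Nonempty ∧
      (p₀ S T F₀ rS pT m A = rankTerm S T rS pT A ∨
        #(A ∩ T) = 1 ∧ p₀ S T F₀ rS pT m A = degreeTerm S T F₀ m A) := by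
  by_cases hA : A ⊆ S ∪ T ∧ memH₀ F₀ A
  · refine ⟨hA.1, hA.2, ?_⟩
    rw [p₀_of_mem hA] at h ⊢
    split_ifs at h ⊢ with h1 h2
    · refine ⟨card_pos.mp (by omega), ?_⟩
      rcases max_choice (rankTerm S T rS pT A) (degreeTerm S T F₀ m A) with h' | h'
      · exact Or.inl h'
      · exact Or.inr ⟨h1, h'⟩
    · exact ⟨card_pos.mp (by omega), Or.inl rfl⟩
    · exact absurd h (lt_irrefl 0)
  · rw [p₀, if_neg hA] at h
    exact absurd h (lt_irrefl 0)

theorem degreeTerm_of_inter_eq_singleton {y : α} (h : A ∩ T = {y}) :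
    degreeTerm S T F₀ m A = m y - #(A ∩ S) + degT F₀ y := by
  rw [degreeTerm, h, sum_singleton, sum_singleton]

theorem memH₀.inter (hA : memH₀ F₀ A) (hB : memH₀ F₀ B) : memH₀ F₀ (A ∩ B) :=
  fun e he h => mem_inter.mpr ⟨hA e he (mem_inter.mp h).1, hB e he (mem_inter.mp h).2⟩

theorem nbrs_subset (hF₀ : F₀ ⊆ S ×ˢ T) (Z : Finset α) : nbrs F₀ Z ⊆ S := by
  intro x hx
  obtain ⟨e, he, rfl⟩ := mem_image.mp hx
  exact (mem_product.mp (hF₀ (mem_filter.mp he).1)).1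

theorem nbrs_subset_of_memH₀ (hF₀ : F₀ ⊆ S ×ˢ T) (hA : memH₀ F₀ A) :
    nbrs F₀ (A ∩ T) ⊆ A ∩ S := by
  intro x hx
  refine mem_inter.mpr ⟨?_, nbrs_subset hF₀ _ hx⟩
  obtain ⟨e, he, rfl⟩ := mem_image.mp hx
  obtain ⟨heF, heA⟩ := mem_filter.mp he
  exact hA e heF (mem_inter.mp heA).1

end p₀

namespace StarCond

variable {S T : Finset α} {F₀ : Finset (α × α)} {rS : Finset α → ℕ} {pT : Finset α → ℤ}
  {m : α → ℤ} {γ : ℤ}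

theorem pT_le_rank (hstar : StarCond S T F₀ rS pT m γ) (hF₀ : F₀ ⊆ S ×ˢ T)
    (hγS : ∑ v ∈ S, m v = γ) {Y : Finset α} (hYT : Y ⊆ T) (hY : Y.Nonempty) :
    pT Y ≤ rS S := by
  have h := hstar S subset_rfl ∅ (empty_subset T) {Y}
    (fun Ti hTi => mem_singleton.mp hTi ▸ ⟨hY, by rwa [sdiff_empty]⟩)
    (fun T₁ h₁ T₂ h₂ hne => absurd ((mem_singleton.mp h₁).trans (mem_singleton.mp h₂).symm) hne)
  have hnbrs : S ∪ nbrs F₀ Y = S := union_eq_left.mpr (nbrs_subset hF₀ Y)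
  have hnoedges : edgesBetween ((S ×ˢ T) \ F₀) S ∅ = 0 := by simp [edgesBetween]
  rw [sum_empty, sum_singleton, hnoedges, hnbrs, hγS] at h
  omega

theorem add_degT_le_card (hstar : StarCond S T F₀ rS pT m γ) (hF₀ : F₀ ⊆ S ×ˢ T)
    (hγS : ∑ v ∈ S, m v = γ) {y : α} (hy : y ∈ T) :
    m y + degT F₀ y ≤ #S := by
  have h := hstar S subset_rfl {y} (singleton_subset_iff.mpr hy) ∅
    (fun _ h => absurd h (notMem_empty _)) (fun _ h => absurd h (notMem_empty _))
  have hcount :=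
    edgesBetween_sdiff_singleton_add_degT_le (S ×ˢ T) subset_rfl (nbrs_subset hF₀ {y})
  rw [sum_empty, sum_singleton, hγS] at h
  omega

end StarCond

section Uncrossing

variable {S T : Finset α} {F₀ : Finset (α × α)} {rS : Finset α → ℕ} {pT : Finset α → ℤ}
  {m : α → ℤ} {γ : ℤ} {A B : Finset α}

theorem inter_inter_eq_of_card_eq_one (hAB : (A ∩ B ∩ T).Nonempty) (hB : #(B ∩ T) = 1) :
    A ∩ B ∩ T = B ∩ T :=
  eq_of_subset_of_card_le (inter_subset_inter_right inter_subset_right) (hB ▸ card_pos.mpr hAB)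

theorem rankTerm_add_rankTerm_le (hstar : StarCond S T F₀ rS pT m γ) (hF₀ : F₀ ⊆ S ×ˢ T)
    (hγS : ∑ v ∈ S, m v = γ) (hrS : IsRankFn S rS) (hpT : IsPosIntersectingSupermodular T pT)
    (hAB : (A ∩ B ∩ T).Nonempty) (hU : S ⊆ A ∪ B) (hA : 0 < pT (A ∩ T)) (hB : 0 < pT (B ∩ T)) :
    rankTerm S T rS pT A + rankTerm S T rS pT B ≤ rankTerm S T rS pT (A ∩ B) := by
  rw [inter_inter_distrib_right] at hAB
  have hsuper := hpT _ _ inter_subset_right inter_subset_right hAB hA hB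
  have hunion := hstar.pT_le_rank hF₀ hγS (union_subset inter_subset_right inter_subset_right)
    (hAB.mono inter_subset_union)
  have hsub := hrS.add_le_of_subset_union hU
  rw [← inter_inter_distrib_right] at hsuper
  simp only [rankTerm]
  omega

theorem rankTerm_add_degreeTerm_le (hstar : StarCond S T F₀ rS pT m γ) (hF₀ : F₀ ⊆ S ×ˢ T)
    (hγS : ∑ v ∈ S, m v = γ) (hrS : IsRankFn S rS)
    (hAB : (A ∩ B ∩ T).Nonempty) (hU : S ⊆ A ∪ B) (hB : #(B ∩ T) = 1) :
    rankTerm S T rS pT A + degreeTerm S T F₀ m B ≤ degreeTerm S T F₀ m (A ∩ B) := by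
  have hABT := inter_inter_eq_of_card_eq_one hAB hB
  have hpT := hstar.pT_le_rank hF₀ hγS inter_subset_right
    (hAB.mono (inter_subset_inter_right inter_subset_left))
  have hrank := hrS.add_card_le (inter_subset_right : A ∩ S ⊆ S) subset_rfl
  have hcard := card_inter_add_card_inter_of_subset_union hU
  simp only [rankTerm, degreeTerm, hABT]
  omega

theorem degreeTerm_add_degreeTerm_le (hstar : StarCond S T F₀ rS pT m γ)
    (hF₀ : F₀ ⊆ S ×ˢ T) (hγS : ∑ v ∈ S, m v = γ) (hAB : (A ∩ B ∩ T).Nonempty)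
    (hU : S ⊆ A ∪ B) (hA : #(A ∩ T) = 1) (hB : #(B ∩ T) = 1) :
    degreeTerm S T F₀ m A + degreeTerm S T F₀ m B ≤ degreeTerm S T F₀ m (A ∩ B) := by
  obtain ⟨y, hy⟩ := card_eq_one.mp hB
  have hBT := inter_inter_eq_of_card_eq_one hAB hB
  have hAT : A ∩ B ∩ T = A ∩ T := by
    rw [inter_comm A B] at hAB ⊢; exact inter_inter_eq_of_card_eq_one hAB hA
  have hy' := hstar.add_degT_le_card hF₀ hγS (y := y)
    (mem_inter.mp ((hy ▸ mem_singleton_self y : y ∈ B ∩ T))).2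
  have hcard := card_inter_add_card_inter_of_subset_union hU
  rw [degreeTerm_of_inter_eq_singleton (hAT ▸ hBT ▸ hy), degreeTerm_of_inter_eq_singleton hy,
    degreeTerm_of_inter_eq_singleton (hBT ▸ hy)]
  omega

/-- Uncrossing: each of `A`, `B` is evaluated in a branch attaining `p₀`, and `A ∩ B` in the
`r_S`-branch if both are, in the degree branch otherwise. -/
theorem p₀_add_p₀_le_p₀_inter (hstar : StarCond S T F₀ rS pT m γ) (hF₀ : F₀ ⊆ S ×ˢ T)
    (hγS : ∑ v ∈ S, m v = γ) (hrS : IsRankFn S rS) (hpT : IsPosIntersectingSupermodular T pT)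
    (hA : 0 < p₀ S T F₀ rS pT m A) (hB : 0 < p₀ S T F₀ rS pT m B)
    (hAB : (A ∩ B ∩ T).Nonempty) (hU : S ⊆ A ∪ B) :
    p₀ S T F₀ rS pT m A + p₀ S T F₀ rS pT m B ≤ p₀ S T F₀ rS pT m (A ∩ B) := by
  obtain ⟨hAV, hAH, -, hAcases⟩ := p₀_pos_cases hA
  obtain ⟨-, hBH, -, hBcases⟩ := p₀_pos_cases hB
  have hV : A ∩ B ⊆ S ∪ T := inter_subset_left.trans hAV
  have hH := hAH.inter hBH
  have hBA : (B ∩ A ∩ T).Nonempty := by rwa [inter_comm B]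
  have hU' : S ⊆ B ∪ A := by rwa [union_comm B]
  rcases hAcases with hA' | ⟨hA1, hA'⟩ <;> rcases hBcases with hB' | ⟨hB1, hB'⟩ <;>
    rw [hA', hB']
  · have hApos : 0 < pT (A ∩ T) := by
      have := hA' ▸ hA; simp only [rankTerm] at this; omega
    have hBpos : 0 < pT (B ∩ T) := by
      have := hB' ▸ hB; simp only [rankTerm] at this; omega
    exact (rankTerm_add_rankTerm_le hstar hF₀ hγS hrS hpT hAB hU hApos hBpos).trans
      (rankTerm_le_p₀ hV hH hAB)
  · exact (rankTerm_add_degreeTerm_le hstar hF₀ hγS hrS hAB hU hB1).trans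
      (degreeTerm_le_p₀ hV hH (inter_inter_eq_of_card_eq_one hAB hB1 ▸ hB1))
  · rw [add_comm, inter_comm A B]
    rw [inter_comm A B] at hV hH
    exact (rankTerm_add_degreeTerm_le hstar hF₀ hγS hrS hBA hU' hA1).trans
      (degreeTerm_le_p₀ hV hH (inter_inter_eq_of_card_eq_one hBA hA1 ▸ hA1))
  · exact (degreeTerm_add_degreeTerm_le hstar hF₀ hγS hAB hU hA1 hB1).trans
      (degreeTerm_le_p₀ hV hH (inter_inter_eq_of_card_eq_one hAB hB1 ▸ hB1))

theorem not_subset_of_p₀_pos (hstar : StarCond S T F₀ rS pT m γ) (hF₀ : F₀ ⊆ S ×ˢ T)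
    (hγS : ∑ v ∈ S, m v = γ) (hA : 0 < p₀ S T F₀ rS pT m A) : ¬S ⊆ A := by
  intro hSA
  obtain ⟨-, -, hAT, hcases⟩ := p₀_pos_cases hA
  have hAS : A ∩ S = S := inter_eq_right.mpr hSA
  rcases hcases with h | ⟨h1, h⟩
  · have := hstar.pT_le_rank hF₀ hγS inter_subset_right hAT
    rw [h, rankTerm, hAS] at hA
    omega
  · obtain ⟨y, hy⟩ := card_eq_one.mp h1
    have := hstar.add_degT_le_card hF₀ hγS
      (mem_inter.mp ((hy ▸ mem_singleton_self y : y ∈ A ∩ T))).2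
    rw [h, degreeTerm_of_inter_eq_singleton hy, hAS] at hA
    omega

end Uncrossing

section Family

variable {S T : Finset α} {F₀ : Finset (α × α)} {rS : Finset α → ℕ} {pT : Finset α → ℤ}
  {m : α → ℤ} {γ : ℤ} {S₁ A : Finset α}

theorem rankTerm_le_of_subset (hF₀ : F₀ ⊆ S ×ˢ T) (hrS : IsRankFn S rS) (hS₁ : S₁ ⊆ S)
    (hH : memH₀ F₀ A) (hS₁A : S₁ ⊆ A) :
    rankTerm S T rS pT A ≤ pT (A ∩ T) - rS (S₁ ∪ nbrs F₀ (A ∩ T)) := by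
  have := hrS.mono (union_subset (subset_inter hS₁A hS₁) (nbrs_subset_of_memH₀ hF₀ hH))
    inter_subset_right
  rw [rankTerm]
  omega

theorem degreeTerm_le_of_subset (hF₀ : F₀ ⊆ S ×ˢ T) (hS₁ : S₁ ⊆ S) (hH : memH₀ F₀ A)
    (hS₁A : S₁ ⊆ A) (hA : #(A ∩ T) = 1) :
    degreeTerm S T F₀ m A ≤ (∑ y ∈ A ∩ T, m y) - edgesBetween ((S ×ˢ T) \ F₀) S₁ (A ∩ T) := by
  obtain ⟨y, hy⟩ := card_eq_one.mp hA
  have := edgesBetween_sdiff_singleton_add_degT_le (S ×ˢ T) (subset_inter hS₁A hS₁)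
    (hy ▸ nbrs_subset_of_memH₀ hF₀ hH)
  rw [degreeTerm_of_inter_eq_singleton hy, hy, sum_singleton]
  omega

/-- Condition (★) for `X = S₁`, `Y` the union of the `T`-parts of the members of `𝓑`, and the
subpartition formed by the `T`-parts of the members of `𝓐`. -/
theorem StarCond.le_of_pairwiseDisjoint (hstar : StarCond S T F₀ rS pT m γ) (hS₁ : S₁ ⊆ S)
    {𝓐 𝓑 : Finset (Finset α)} (h𝓐𝓑 : Disjoint 𝓐 𝓑)
    (hdisj : (↑(𝓐 ∪ 𝓑) : Set (Finset α)).PairwiseDisjoint (· ∩ T))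
    (h𝓐 : ∀ A ∈ 𝓐, (A ∩ T).Nonempty) :
    ∑ s ∈ S₁, m s + ∑ B ∈ 𝓑, ((∑ y ∈ B ∩ T, m y) - edgesBetween ((S ×ˢ T) \ F₀) S₁ (B ∩ T))
      + ∑ A ∈ 𝓐, (pT (A ∩ T) - rS (S₁ ∪ nbrs F₀ (A ∩ T))) ≤ γ := by
  have hdisj𝓐 := hdisj.subset (coe_subset.mpr subset_union_left)
  have hdisj𝓑 := hdisj.subset (coe_subset.mpr subset_union_right)
  have hinj : Set.InjOn (· ∩ T) 𝓐 := fun A hA B hB (hAB : A ∩ T = B ∩ T) =>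
    hdisj𝓐.elim hA hB fun h => (h𝓐 A hA).ne_empty (disjoint_self.mp (by rwa [← hAB] at h))
  have h := hstar S₁ hS₁ (𝓑.biUnion (· ∩ T)) (biUnion_subset.mpr fun _ _ => inter_subset_right)
    (𝓐.image (· ∩ T))
    (by
      simp only [mem_image]
      rintro _ ⟨A, hA, rfl⟩
      refine ⟨h𝓐 A hA, fun y hy => mem_sdiff.mpr ⟨(mem_inter.mp hy).2, fun hyY => ?_⟩⟩
      obtain ⟨B, hB, hyB⟩ := mem_biUnion.mp hyY
      have hAB : A ≠ B := fun h => disjoint_left.mp h𝓐𝓑 hA (h ▸ hB)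
      exact disjoint_left.mp (hdisj (mem_union_left _ hA) (mem_union_right _ hB) hAB) hy hyB)
    (by
      simp only [mem_image]
      rintro _ ⟨A, hA, rfl⟩ _ ⟨B, hB, rfl⟩ hne
      exact hdisj𝓐 hA hB fun h => hne (h ▸ rfl))
  rw [sum_image hinj, sum_biUnion hdisj𝓑, edgesBetween_biUnion _ _ hdisj𝓑] at h
  push_cast at h
  rw [sum_sub_distrib]
  linarith

theorem add_sum_p₀_le_of_pairwiseDisjoint (hstar : StarCond S T F₀ rS pT m γ)
    (hF₀ : F₀ ⊆ S ×ˢ T) (hrS : IsRankFn S rS) (hS₁ : S₁ ⊆ S) {𝓙 : Finset (Finset α)}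
    (h𝓙 : ∀ A ∈ 𝓙, 0 < p₀ S T F₀ rS pT m A ∧ S₁ ⊆ A)
    (hdisj : (𝓙 : Set (Finset α)).PairwiseDisjoint (· ∩ T)) :
    ∑ s ∈ S₁, m s + ∑ A ∈ 𝓙, p₀ S T F₀ rS pT m A ≤ γ := by
  set 𝓐 := 𝓙.filter fun A => p₀ S T F₀ rS pT m A = rankTerm S T rS pT A
  set 𝓑 := 𝓙.filter fun A => ¬p₀ S T F₀ rS pT m A = rankTerm S T rS pT A
  have h𝓙𝓐𝓑 : 𝓐 ∪ 𝓑 = 𝓙 := filter_union_filter_not_eq _ _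
  have h𝓐 : ∑ A ∈ 𝓐, p₀ S T F₀ rS pT m A ≤
      ∑ A ∈ 𝓐, (pT (A ∩ T) - rS (S₁ ∪ nbrs F₀ (A ∩ T))) := by
    refine sum_le_sum fun A hA => ?_
    obtain ⟨hA𝓙, hAr⟩ := mem_filter.mp hA
    rw [hAr]
    exact rankTerm_le_of_subset hF₀ hrS hS₁ (p₀_pos_cases (h𝓙 A hA𝓙).1).2.1 (h𝓙 A hA𝓙).2
  have h𝓑 : ∑ B ∈ 𝓑, p₀ S T F₀ rS pT m B ≤
      ∑ B ∈ 𝓑, ((∑ y ∈ B ∩ T, m y) - edgesBetween ((S ×ˢ T) \ F₀) S₁ (B ∩ T)) := by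
    refine sum_le_sum fun B hB => ?_
    obtain ⟨hB𝓙, hBr⟩ := mem_filter.mp hB
    obtain ⟨-, hH, -, hcases⟩ := p₀_pos_cases (h𝓙 B hB𝓙).1
    obtain ⟨h1, hBd⟩ := hcases.resolve_left hBr
    rw [hBd]
    exact degreeTerm_le_of_subset hF₀ hS₁ hH (h𝓙 B hB𝓙).2 h1
  have := hstar.le_of_pairwiseDisjoint hS₁ (disjoint_filter_filter_not _ _ _) (h𝓙𝓐𝓑 ▸ hdisj)
    fun A hA => (p₀_pos_cases (h𝓙 A (filter_subset _ _ hA)).1).2.2.1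
  rw [← h𝓙𝓐𝓑, sum_union (disjoint_filter_filter_not _ _ _)]
  linarith

/-- One uncrossing step: a crossing pair `A`, `B` is replaced by `A ∩ B`, or dropped when
`p₀ (A ∩ B) ≤ 0`. -/
theorem exists_card_lt_sum_p₀_le (hstar : StarCond S T F₀ rS pT m γ) (hF₀ : F₀ ⊆ S ×ˢ T)
    (hγS : ∑ v ∈ S, m v = γ) (hrS : IsRankFn S rS) (hpT : IsPosIntersectingSupermodular T pT)
    {𝓙 : Finset (Finset α)} (h𝓙 : ∀ A ∈ 𝓙, 0 < p₀ S T F₀ rS pT m A ∧ S₁ ⊆ A)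
    (hind : (𝓙 : Set (Finset α)).Pairwise (STIndependent S T)) {A B : Finset α}
    (hA : A ∈ 𝓙) (hB : B ∈ 𝓙) (hAB : A ≠ B) (hcross : (A ∩ B ∩ T).Nonempty) :
    ∃ 𝓙' : Finset (Finset α), #𝓙' < #𝓙 ∧ (∀ C ∈ 𝓙', 0 < p₀ S T F₀ rS pT m C ∧ S₁ ⊆ C) ∧
      (𝓙' : Set (Finset α)).Pairwise (STIndependent S T) ∧
      ∑ C ∈ 𝓙, p₀ S T F₀ rS pT m C ≤ ∑ C ∈ 𝓙', p₀ S T F₀ rS pT m C := by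
  have hB' : B ∈ 𝓙.erase A := mem_erase.mpr ⟨hAB.symm, hB⟩
  set R := (𝓙.erase A).erase B with hRdef
  have hR : R ⊆ 𝓙 := (erase_subset _ _).trans (erase_subset _ _)
  have hcardR : #R + 2 = #𝓙 := by
    rw [card_erase_of_mem hB', card_erase_of_mem hA]
    have := card_pos.mpr ⟨B, hB'⟩
    rw [card_erase_of_mem hA] at this
    omega
  have hsum : ∑ C ∈ 𝓙, p₀ S T F₀ rS pT m C =
      p₀ S T F₀ rS pT m A + (p₀ S T F₀ rS pT m B + ∑ C ∈ R, p₀ S T F₀ rS pT m C) := by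
    rw [add_sum_erase _ _ hB', add_sum_erase _ _ hA]
  have hle := p₀_add_p₀_le_p₀_inter hstar hF₀ hγS hrS hpT (h𝓙 A hA).1 (h𝓙 B hB).1 hcross
    ((hind hA hB hAB).subset_union hcross)
  by_cases hpos : 0 < p₀ S T F₀ rS pT m (A ∩ B)
  · have hnotin : A ∩ B ∉ R := by
      intro hC
      have hne : A ∩ B ≠ A := fun h => by simp [hRdef, h] at hC
      have hcover := (hind (hR hC) hA hne).subset_union
        (by rwa [inter_eq_left.mpr (inter_subset_left : A ∩ B ⊆ A)])
      rw [union_eq_right.mpr inter_subset_left] at hcover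
      exact not_subset_of_p₀_pos hstar hF₀ hγS (h𝓙 A hA).1 hcover
    refine ⟨insert (A ∩ B) R, ?_, ?_, ?_, ?_⟩
    · have := card_insert_le (A ∩ B) R
      omega
    · exact forall_mem_insert _ _ _ |>.mpr
        ⟨⟨hpos, subset_inter (h𝓙 A hA).2 (h𝓙 B hB).2⟩, fun C hC => h𝓙 C (hR hC)⟩
    · rw [coe_insert]
      refine (hind.mono (coe_subset.mpr hR)).insert_of_symm fun C hC _ => ?_
      have hCA : A ≠ C := fun h => by simp [hRdef, ← h] at hC
      have hCB : B ≠ C := fun h => by simp [hRdef, ← h] at hC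
      exact (hind hA (hR hC) hCA).inter_left (hind hB (hR hC) hCB)
    · rw [sum_insert hnotin, hsum]
      linarith
  · refine ⟨R, by omega, fun C hC => h𝓙 C (hR hC), hind.mono (coe_subset.mpr hR), ?_⟩
    rw [hsum]
    linarith

theorem add_sum_p₀_le (hstar : StarCond S T F₀ rS pT m γ) (hF₀ : F₀ ⊆ S ×ˢ T)
    (hγS : ∑ v ∈ S, m v = γ) (hrS : IsRankFn S rS) (hpT : IsPosIntersectingSupermodular T pT)
    (hS₁ : S₁ ⊆ S) {𝓙 : Finset (Finset α)} (h𝓙 : ∀ A ∈ 𝓙, 0 < p₀ S T F₀ rS pT m A ∧ S₁ ⊆ A)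
    (hind : (𝓙 : Set (Finset α)).Pairwise (STIndependent S T)) :
    ∑ s ∈ S₁, m s + ∑ A ∈ 𝓙, p₀ S T F₀ rS pT m A ≤ γ := by
  induction hn : #𝓙 using Nat.strong_induction_on generalizing 𝓙 with
  | _ n ih =>
  by_cases hdisj : (𝓙 : Set (Finset α)).PairwiseDisjoint (· ∩ T)
  · exact add_sum_p₀_le_of_pairwiseDisjoint hstar hF₀ hrS hS₁ h𝓙 hdisj
  obtain ⟨A, hA, B, hB, hAB, hcross⟩ :
      ∃ A ∈ 𝓙, ∃ B ∈ 𝓙, A ≠ B ∧ ¬Disjoint (A ∩ T) (B ∩ T) := by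
    simpa [Set.PairwiseDisjoint, Set.Pairwise, Function.onFun] using hdisj
  rw [not_disjoint_iff_nonempty_inter, ← inter_inter_distrib_right] at hcross
  obtain ⟨𝓙', hcard, h𝓙', hind', hsum⟩ :=
    exists_card_lt_sum_p₀_le hstar hF₀ hγS hrS hpT h𝓙 hind hA hB hAB hcross
  linarith [ih _ (hn ▸ hcard) h𝓙' hind' rfl]

end Family

section Value

variable {S T : Finset α} {F₀ : Finset (α × α)} {rS : Finset α → ℕ} {pT : Finset α → ℤ}
  {m : α → ℤ} {γ : ℤ} {S₁ : Finset α}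

theorem sum_p₁_image_Vs (hS₁ : S₁ ⊆ S)
    (hclosed : ∀ s ∈ S, ∀ s' ∈ S₁, Vs S T F₀ s = Vs S T F₀ s' → s ∈ S₁) :
    ∑ A ∈ S₁.image (Vs S T F₀), p₁ S T F₀ rS pT m A = ∑ s ∈ S₁, m s := by
  refine sum_image' m fun s hs => ?_
  rw [p₁, if_pos ⟨s, hS₁ hs, rfl⟩]
  refine sum_congr (ext fun s' => ?_) fun _ _ => rfl
  simp only [mem_filter]
  exact ⟨fun ⟨hs', h⟩ => ⟨hclosed s' hs' s hs h.symm, h.symm⟩,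
    fun ⟨hs', h⟩ => ⟨hS₁ hs', h.symm⟩⟩

theorem sum_p₁_le (hST : Disjoint S T) (hstar : StarCond S T F₀ rS pT m γ)
    (hF₀ : F₀ ⊆ S ×ˢ T) (hγS : ∑ v ∈ S, m v = γ) (hrS : IsRankFn S rS)
    (hpT : IsPosIntersectingSupermodular T pT)
    {𝓘 : Finset (Finset α)} (hind : (𝓘 : Set (Finset α)).Pairwise (STIndependent S T)) :
    ∑ A ∈ 𝓘, p₁ S T F₀ rS pT m A ≤ γ := by
  let S₁ := S.filter fun s => Vs S T F₀ s ∈ 𝓘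
  let 𝓥 := S₁.image (Vs S T F₀)
  let 𝓙 := (𝓘 \ 𝓥).filter fun A => 0 < p₀ S T F₀ rS pT m A
  have hS₁ : S₁ ⊆ S := filter_subset _ _
  have h𝓥 : 𝓥 ⊆ 𝓘 := image_subset_iff.mpr fun s hs => (mem_filter.mp hs).2
  have hp₁ : ∀ A ∈ 𝓘 \ 𝓥, p₁ S T F₀ rS pT m A = p₀ S T F₀ rS pT m A := by
    intro A hA
    obtain ⟨hA𝓘, hA𝓥⟩ := mem_sdiff.mp hA
    rw [p₁, if_neg]
    rintro ⟨s, hs, rfl⟩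
    exact hA𝓥 (mem_image_of_mem _ (mem_filter.mpr ⟨hs, hA𝓘⟩))
  have h𝓙 : ∀ A ∈ 𝓙, 0 < p₀ S T F₀ rS pT m A ∧ S₁ ⊆ A := by
    intro A hA
    obtain ⟨hA', hpos⟩ := mem_filter.mp hA
    obtain ⟨hA𝓘, hA𝓥⟩ := mem_sdiff.mp hA'
    obtain ⟨-, hH, hAT, -⟩ := p₀_pos_cases hpos
    refine ⟨hpos, fun s hs => mem_of_stIndependent_Vs hST hH hAT (hS₁ hs)
      (hind hA𝓘 (mem_filter.mp hs).2 ?_)⟩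
    rintro rfl
    exact hA𝓥 (mem_image_of_mem _ hs)
  calc ∑ A ∈ 𝓘, p₁ S T F₀ rS pT m A
      = ∑ A ∈ 𝓥, p₁ S T F₀ rS pT m A + ∑ A ∈ 𝓘 \ 𝓥, p₀ S T F₀ rS pT m A := by
        rw [← sum_sdiff h𝓥, sum_congr rfl hp₁, add_comm]
    _ = ∑ s ∈ S₁, m s + ∑ A ∈ 𝓘 \ 𝓥, p₀ S T F₀ rS pT m A := by
        rw [sum_p₁_image_Vs hS₁ fun s hs s' hs' h =>
          mem_filter.mpr ⟨hs, h ▸ (mem_filter.mp hs').2⟩]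
    _ ≤ ∑ s ∈ S₁, m s + ∑ A ∈ 𝓙, p₀ S T F₀ rS pT m A :=
        (add_le_add_iff_left _).mpr (sum_le_sum_filter_pos (𝓘 \ 𝓥) (p₀ S T F₀ rS pT m))
    _ ≤ γ := add_sum_p₀_le hstar hF₀ hγS hrS hpT hS₁ h𝓙
        (hind.mono (coe_subset.mpr ((filter_subset _ _).trans sdiff_subset)))

end Value

theorem max_total_p₁_value_eq_γ_general
    (S T : Finset α) (hST : Disjoint S T)
    (F₀ : Finset (α × α)) (hF₀ : F₀ ⊆ S ×ˢ T)
    (rS : Finset α → ℕ) (hrS : IsRankFn S rS)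
    (pT : Finset α → ℤ)
    -- `p_T` is positively intersecting supermodular on `T`
    (hpT : ∀ X Y : Finset α, X ⊆ T → Y ⊆ T → (X ∩ Y).Nonempty →
      0 < pT X → 0 < pT Y → pT X + pT Y ≤ pT (X ∩ Y) + pT (X ∪ Y))
    (m : α → ℤ) (γ : ℤ)
    (hγS : ∑ v ∈ S, m v = γ)
    (hstar : StarCond S T F₀ rS pT m γ) :
    IsGreatest {x : ℤ | ∃ 𝓘 : Finset (Finset α),
        (∀ A ∈ 𝓘, A ⊆ S ∪ T) ∧
        (∀ A ∈ 𝓘, ∀ B ∈ 𝓘, A ≠ B → (A ∩ B ∩ T = ∅ ∨ S ⊆ A ∪ B)) ∧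
        x = ∑ A ∈ 𝓘, p₁ S T F₀ rS pT m A} γ := by
  refine ⟨⟨S.image (Vs S T F₀), fun A hA => ?_, pairwise_stIndependent_image_Vs hST hF₀, ?_⟩, ?_⟩
  · obtain ⟨s, -, rfl⟩ := mem_image.mp hA
    exact Vs_subset s
  · rw [sum_p₁_image_Vs subset_rfl fun s hs _ _ _ => hs, hγS]
  · rintro x ⟨𝓘, -, hind, rfl⟩
    exact sum_p₁_le hST hstar hF₀ hγS hrS hpT hind

/-- **Lemma (ν = γ) of the paper.** Under Condition (★), the maximum of
`∑_{V' ∈ 𝓘} p₁(V')` over all `ST`-independent families `𝓘` of subsets of `V = S ∪ T`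
equals `γ`. -/
theorem max_total_p₁_value_eq_γ
    (S T : Finset α) (hST : Disjoint S T) (hS : S.Nonempty) (hT : T.Nonempty)
    (F₀ : Finset (α × α)) (hF₀ : F₀ ⊆ S ×ˢ T)
    (rS : Finset α → ℕ) (hrS : IsRankFn S rS)
    (pT : Finset α → ℤ)
    -- `p_T` is positively intersecting supermodular on `T`
    (hpT : ∀ X Y : Finset α, X ⊆ T → Y ⊆ T → (X ∩ Y).Nonempty →
      0 < pT X → 0 < pT Y → pT X + pT Y ≤ pT (X ∩ Y) + pT (X ∪ Y))
    (m : α → ℤ) (γ : ℤ)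
    (hγS : ∑ v ∈ S, m v = γ) (hγT : ∑ v ∈ T, m v = γ)
    (hstar : StarCond S T F₀ rS pT m γ) :
    IsGreatest {x : ℤ | ∃ 𝓘 : Finset (Finset α),
        (∀ A ∈ 𝓘, A ⊆ S ∪ T) ∧
        (∀ A ∈ 𝓘, ∀ B ∈ 𝓘, A ≠ B → (A ∩ B ∩ T = ∅ ∨ S ⊆ A ∪ B)) ∧
        x = ∑ A ∈ 𝓘, p₁ S T F₀ rS pT m A} γ :=
  max_total_p₁_value_eq_γ_general S T hST F₀ hF₀ rS hrS pT hpT m γ hγS hstar
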